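/- For all positive reals α and β, ∫₀^∞ (1/√t)·exp(−αt − β/t) dt = √(π/α)·e^{−2√(αβ)}. -/

import Mathlib

/-!
With `a = √α`, `b = √β` and `t = x²` one has `α t + β / t = (a x - b / x)² + 2ab`, so the integral
is `2 e^{-2ab} ∫₀^∞ exp (-(a x - b / x)²) dx`. For even integrable `f`, the substitution
`y = a x - b / x` gives `∫_ℝ f = ∫₀^∞ (a + b / x²) f (a x - b / x) dx`, and the inversion
`x ↦ (b / a) / x` shows that the `b / x²` part contributes exactly as much as the `a` part
(Cauchy–Schlömilch). Hence `∫₀^∞ exp (-(a x - b / x)²) dx = √π / (2a)`.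
-/

open MeasureTheory Real Set

section

variable {E : Type*} [NormedAddCommGroup E] [NormedSpace ℝ E]

theorem integral_comp_div_Ioi (g : ℝ → E) {c : ℝ} (hc : 0 < c) :
    ∫ x in Ioi 0, (c / x ^ 2) • g (c / x) = ∫ x in Ioi 0, g x := by
  have hderiv : ∀ x ∈ Ioi (0 : ℝ), HasDerivWithinAt (fun u => c / u) (-(c / x ^ 2)) (Ioi 0) x :=
    fun x hx => by
      simpa [div_eq_mul_inv, mul_comm, neg_div] using
        ((hasDerivAt_inv (mem_Ioi.mp hx).ne').const_mul c).hasDerivWithinAt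
  have hinj : InjOn (fun u => c / u) (Ioi (0 : ℝ)) := fun x hx y hy h => by
    rwa [div_eq_div_iff (mem_Ioi.mp hx).ne' (mem_Ioi.mp hy).ne', mul_right_inj' hc.ne', eq_comm]
      at h
  have himage : (fun u => c / u) '' Ioi (0 : ℝ) = Ioi 0 := by
    ext y
    refine ⟨?_, fun hy => ⟨c / y, div_pos hc hy, div_div_cancel₀ hc.ne'⟩⟩
    rintro ⟨x, hx, rfl⟩
    exact div_pos hc hx
  have hsubst := integral_image_eq_integral_abs_deriv_smul measurableSet_Ioi hderiv hinj g
  rw [himage] at hsubst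
  rw [hsubst]
  refine setIntegral_congr_fun measurableSet_Ioi fun x hx => ?_
  rw [abs_neg, abs_of_pos (div_pos hc (pow_pos (mem_Ioi.mp hx) 2))]

variable {a b : ℝ}

theorem hasDerivAt_mul_sub_div (a b : ℝ) {x : ℝ} (hx : x ≠ 0) :
    HasDerivAt (fun u => a * u - b / u) (a + b / x ^ 2) x := by
  have hdiv : HasDerivAt (fun u => b / u) (-(b / x ^ 2)) x := by
    simpa [div_eq_mul_inv, mul_comm, neg_div] using (hasDerivAt_inv hx).const_mul b
  have hmul : HasDerivAt (fun u => a * u) a x := by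
    simpa using (hasDerivAt_id x).const_mul a
  simpa only [sub_neg_eq_add] using hmul.fun_sub hdiv

theorem strictMonoOn_mul_sub_div (ha : 0 < a) (hb : 0 ≤ b) :
    StrictMonoOn (fun u => a * u - b / u) (Ioi 0) := fun x hx y hy hxy => by
  have : b / y ≤ b / x := div_le_div_of_nonneg_left hb hx hxy.le
  have : a * x < a * y := mul_lt_mul_of_pos_left hxy ha
  dsimp only
  linarith

theorem image_mul_sub_div_Ioi (ha : 0 < a) (hb : 0 < b) :
    (fun u => a * u - b / u) '' Ioi 0 = univ := by
  refine eq_univ_of_forall fun y => ?_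
  -- the positive root of `a u² - y u - b = 0`
  set s := √(y ^ 2 + 4 * (a * b))
  have hs : s ^ 2 = y ^ 2 + 4 * (a * b) := sq_sqrt (by positivity)
  have hys : -y < s := lt_of_abs_lt <| abs_lt_of_sq_lt_sq
    (by rw [neg_sq, hs]; linarith [mul_pos ha hb]) (sqrt_nonneg _)
  set u := (y + s) / (2 * a)
  have hu : 0 < u := div_pos (by linarith) (by linarith)
  have hroot : a * u ^ 2 - y * u - b = 0 := by
    simp only [u]
    field_simp
    linear_combination hs
  refine ⟨u, hu, ?_⟩
  have : b / u = a * u - y := by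
    rw [div_eq_iff hu.ne']
    linear_combination -hroot
  dsimp only
  linarith

theorem integrableOn_Ioi_smul_comp_mul_sub_div_iff (f : ℝ → E) (ha : 0 < a) (hb : 0 < b) :
    IntegrableOn (fun x => (a + b / x ^ 2) • f (a * x - b / x)) (Ioi 0) ↔ Integrable f := by
  rw [← integrableOn_univ, ← image_mul_sub_div_Ioi ha hb,
    integrableOn_image_iff_integrableOn_abs_deriv_smul measurableSet_Ioi
      (fun x hx => (hasDerivAt_mul_sub_div a b (mem_Ioi.mp hx).ne').hasDerivWithinAt)
      (strictMonoOn_mul_sub_div ha hb.le).injOn]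
  refine integrableOn_congr_fun (fun x hx => ?_) measurableSet_Ioi
  rw [abs_of_pos (by have := mem_Ioi.mp hx; positivity)]

theorem integral_eq_integral_Ioi_smul_comp_mul_sub_div (f : ℝ → E) (ha : 0 < a) (hb : 0 < b) :
    ∫ y, f y = ∫ x in Ioi 0, (a + b / x ^ 2) • f (a * x - b / x) := by
  rw [← setIntegral_univ, ← image_mul_sub_div_Ioi ha hb,
    integral_image_eq_integral_abs_deriv_smul measurableSet_Ioi
      (fun x hx => (hasDerivAt_mul_sub_div a b (mem_Ioi.mp hx).ne').hasDerivWithinAt)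
      (strictMonoOn_mul_sub_div ha hb.le).injOn]
  refine setIntegral_congr_fun measurableSet_Ioi fun x hx => ?_
  rw [abs_of_pos (by have := mem_Ioi.mp hx; positivity)]

theorem integrableOn_Ioi_comp_mul_sub_div {f : ℝ → E} (hf : Integrable f)
    (ha : 0 < a) (hb : 0 < b) : IntegrableOn (fun x => f (a * x - b / x)) (Ioi 0) := by
  have hint := (integrableOn_Ioi_smul_comp_mul_sub_div_iff f ha hb).mpr hf
  have hbdd : ∀ᵐ x ∂volume.restrict (Ioi 0), ‖(a + b / x ^ 2)⁻¹‖ ≤ a⁻¹ := by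
    filter_upwards [ae_restrict_mem measurableSet_Ioi] with x hx
    have : 0 ≤ b / x ^ 2 := by have := mem_Ioi.mp hx; positivity
    rw [norm_inv, norm_of_nonneg (by linarith)]
    exact inv_anti₀ ha (by linarith)
  have hmeas : Measurable fun x : ℝ => (a + b / x ^ 2)⁻¹ := by fun_prop
  refine IntegrableOn.congr_fun (hint.bdd_smul a⁻¹ hmeas.aestronglyMeasurable hbdd)
    (fun x hx => ?_) measurableSet_Ioi
  have : a + b / x ^ 2 ≠ 0 := by have := mem_Ioi.mp hx; positivity
  simp only [Pi.smul_apply', smul_smul, inv_mul_cancel₀ this, one_smul]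

theorem integral_comp_mul_sub_div_Ioi {f : ℝ → E} (hf : Integrable f) (heven : ∀ y, f (-y) = f y)
    (ha : 0 < a) (hb : 0 < b) :
    ∫ x in Ioi 0, f (a * x - b / x) = (2 * a)⁻¹ • ∫ y, f y := by
  set g := fun x => f (a * x - b / x)
  have hg : IntegrableOn g (Ioi 0) := integrableOn_Ioi_comp_mul_sub_div hf ha hb
  -- inverting `x ↦ (b / a) / x` maps `a x - b / x` to its negative
  have hinv : ∫ x in Ioi 0, (b / x ^ 2) • g x = a • ∫ x in Ioi 0, g x := by
    rw [← integral_comp_div_Ioi _ (div_pos hb ha), ← integral_smul]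
    refine setIntegral_congr_fun measurableSet_Ioi fun x hx => ?_
    have hx : x ≠ 0 := (mem_Ioi.mp hx).ne'
    have : a * (b / a / x) - b / (b / a / x) = -(a * x - b / x) := by
      field_simp
      ring
    simp only [g, this, heven, smul_smul]
    congr 1
    field_simp
  have hsplit : ∫ y, f y = a • (∫ x in Ioi 0, g x) + ∫ x in Ioi 0, (b / x ^ 2) • g x := by
    have hrest : IntegrableOn (fun x => (b / x ^ 2) • g x) (Ioi 0) := by
      refine (((integrableOn_Ioi_smul_comp_mul_sub_div_iff f ha hb).mpr hf).sub
        (hg.smul a)).congr_fun (fun x _ => ?_) measurableSet_Ioi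
      simp only [Pi.sub_apply, Pi.smul_apply, add_smul, add_sub_cancel_left, g]
    rw [integral_eq_integral_Ioi_smul_comp_mul_sub_div f ha hb, ← integral_smul]
    simp only [add_smul]
    exact integral_add (hg.smul a) hrest
  rw [hsplit, hinv, ← two_smul ℝ, smul_smul, smul_smul,
    show (2 * a)⁻¹ * 2 * a = 1 by field_simp, one_smul]

theorem integral_exp_neg_sq_mul_sub_div_Ioi (ha : 0 < a) (hb : 0 < b) :
    ∫ x in Ioi 0, exp (-(a * x - b / x) ^ 2) = √π / (2 * a) := by
  have hgauss : ∫ y, exp (-y ^ 2) = √π := by simpa using integral_gaussian 1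
  rw [integral_comp_mul_sub_div_Ioi (f := fun y => exp (-y ^ 2))
    (by simpa using integrable_exp_neg_mul_sq one_pos) (fun y => by rw [neg_sq]) ha hb,
    hgauss, smul_eq_mul, inv_mul_eq_div]

end

/-- Lemma 9 (Itô–McKean, p. 17): for all positive reals `α` and `β`,
`∫_0^∞ t^{-1/2} exp(-α t - β / t) dt = √(π/α) e^{-2√(αβ)}`. -/
theorem statement12 (α β : ℝ) (hα : 0 < α) (hβ : 0 < β) :
    ∫ t in Set.Ioi (0 : ℝ), (1 / Real.sqrt t) * Real.exp (-α * t - β / t) =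
      Real.sqrt (π / α) * Real.exp (-2 * Real.sqrt (α * β)) := by
  have hexponent (x : ℝ) (hx : x ≠ 0) :
      -α * x ^ 2 - β / x ^ 2 = -(√α * x - √β / x) ^ 2 + -2 * (√α * √β) := by
    field_simp
    linear_combination x ^ 4 * sq_sqrt hα.le + sq_sqrt hβ.le
  rw [← integral_comp_rpow_Ioi_of_pos two_pos]
  calc ∫ x in Ioi 0, (2 * x ^ ((2 : ℝ) - 1)) •
        (1 / √(x ^ (2 : ℝ)) * exp (-α * x ^ (2 : ℝ) - β / x ^ (2 : ℝ)))
      = ∫ x in Ioi 0, 2 * exp (-2 * (√α * √β)) * exp (-(√α * x - √β / x) ^ 2) := by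
        refine setIntegral_congr_fun measurableSet_Ioi fun x hx => ?_
        have hx : 0 < x := hx
        norm_num only [rpow_two, sqrt_sq hx.le, rpow_one, smul_eq_mul]
        rw [hexponent x hx.ne', exp_add]
        field_simp
    _ = √(π / α) * exp (-2 * √(α * β)) := by
        rw [integral_const_mul, integral_exp_neg_sq_mul_sub_div_Ioi (sqrt_pos.mpr hα)
          (sqrt_pos.mpr hβ), sqrt_div' π hα.le, sqrt_mul hα.le]
        field_simp
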